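/- The expected positive spread of the TS-N model, f̃^+(S) = E_{X,Y}[|B^+(S)|], where the expectation is over the random multinomial in-neighbor sampling X and the random correction sampling Y, is a monotone and submodular function of the seed set S ⊆ V. -/

import Mathlib

/-- `anc parent v k` is the `k`-fold iterated live in-neighbor of `v` in a live-edge subgraph
in which every node has at most one incoming live edge; the subgraph is encoded by
`parent : V → Option V`, where `parent v = some u` means that the live edge `(u, v)` is
present. -/
def anc {V : Type*} (parent : V → Option V) (v : V) : ℕ → Option V
  | 0 => some v
  | k + 1 => (anc parent v k).bind parent

/-- `v` is reachable from the seed set `S` in the live-edge subgraph, i.e. `v ∈ B(S)`. -/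
def reaches {V : Type*} (parent : V → Option V) (S : Finset V) (v : V) : Prop :=
  ∃ k s, anc parent v k = some s ∧ s ∈ S

/-- The distance from `v` to its nearest seed ancestor along the chain of live in-neighbors. -/
noncomputable def seedDist {V : Type*} (parent : V → Option V) (S : Finset V) (v : V) : ℕ :=
  sInf {k | ∃ s, anc parent v k = some s ∧ s ∈ S}

/-- The sign label of the `j`-th edge on the unique live path into `v`, counted backwards
from `v` (so `j = 0` is the live edge into `v` itself).  `Y u` denotes the label of the
unique live edge into `u` (and is irrelevant when `u` has no live in-edge). -/
def labelAt {V : Type*} (parent : V → Option V) (Y : V → SignType) (v : V) (j : ℕ) :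
    SignType :=
  (anc parent v j).elim 0 Y

/-- `v ∈ B^+(S)`: `v` is reachable from `S`, and on the live path from its nearest seed
ancestor either every edge label is `0`, or the last edge with a nonzero label has label
`+1`. -/
def posNode {V : Type*} (parent : V → Option V) (Y : V → SignType) (S : Finset V)
    (v : V) : Prop :=
  reaches parent S v ∧
    ((∀ j < seedDist parent S v, labelAt parent Y v j = 0) ∨
      ∃ j < seedDist parent S v, labelAt parent Y v j = SignType.pos ∧
        ∀ i < j, labelAt parent Y v i = 0)

/-- The set `B^+(S)` of positively activated nodes. -/
def Bpos {V : Type*} (parent : V → Option V) (Y : V → SignType) (S : Finset V) : Set V :=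
  {v | posNode parent Y S v}


open MeasureTheory
open scoped Classical

/-- The uniform distribution on `[0,1]`. -/
noncomputable def unif : Measure ℝ := volume.restrict (Set.Icc (0 : ℝ) 1)

/-- Cumulative weight, at node `v`, of the in-neighbors preceding `u` in the fixed
enumeration `e` of the nodes. -/
noncomputable def cumBefore {V : Type*} [Fintype V] (w : V → V → ℝ)
    (e : V ≃ Fin (Fintype.card V)) (v u : V) : ℝ :=
  ∑ u' ∈ Finset.univ.filter (fun u' => e u' < e u), w u' v

/-- The multinomial in-neighbor sampling: node `v` selects in-neighbor `u` exactly when the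
uniform sample `r v` falls in the interval `[cum(u), cum(u) + w(u,v))`, so `u` is selected
with probability `w(u,v)` and nothing is selected with probability `1 − Σ_u w(u,v)`. -/
noncomputable def sampledParent {V : Type*} [Fintype V] (w : V → V → ℝ)
    (e : V ≃ Fin (Fintype.card V)) (r : V → ℝ) (v : V) : Option V :=
  if h : ∃ u, cumBefore w e v u ≤ r v ∧ r v < cumBefore w e v u + w u v then some h.choose
  else none

/-- The correction sampling: the live edge into `v` receives label `+1` with probability
`q^+(v)`, label `0` with probability `1 − q^+(v) − q^-(v)`, and label `−1` with probability
`q^-(v)`, realized from the uniform sample `y v`. -/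
noncomputable def sampledSign {V : Type*} (qp qm : V → ℝ) (y : V → ℝ) (v : V) : SignType :=
  if y v < qp v then SignType.pos
  else if y v < qp v + (1 - (qp v + qm v)) then SignType.zero
  else SignType.neg

/-- The expected positive spread of the TS-N model,
`f̃^+(S) = E_{X,Y}[|B^+(S)|]`, the expectation being over the random multinomial in-neighbor
sampling `X` and the random correction sampling `Y`. -/
noncomputable def tsnExpPos {V : Type*} [Fintype V] [DecidableEq V] (w : V → V → ℝ)
    (qp qm : V → ℝ) (e : V ≃ Fin (Fintype.card V)) (S : Finset V) : ℝ :=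
  ∫ ω : (V → ℝ) × (V → ℝ),
      ((Bpos (sampledParent w e ω.1) (sampledSign qp qm ω.2) S).ncard : ℝ)
    ∂((Measure.pi fun _ : V => unif).prod (Measure.pi fun _ : V => unif))

/-!
Everything happens pointwise, for a fixed sample `(X, Y)`. Adding seeds can only shorten the
path from a node back to its nearest seed, and the sign condition defining `B^+` only gets
weaker on a shorter path; hence `B^+` is monotone. If `u` is gained when `v` is added to `T`,
then `v` is the nearest seed of `u` in `T ∪ {v}`, so it is also its nearest seed in `S ∪ {v}`
for `S ⊆ T`, with the same path; hence `u` is gained when `v` is added to `S`. The marginal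
gains are thus nested, `S ↦ |B^+(S)|` is submodular for every sample, and both properties
survive taking expectations.
-/

/-- The sign condition of `posNode`, for the label sequence `f = labelAt parent Y v` read
backwards from `v` up to the nearest seed at distance `n`. -/
def FirstNonzeroPos (f : ℕ → SignType) (n : ℕ) : Prop :=
  (∀ j < n, f j = 0) ∨ ∃ j < n, f j = SignType.pos ∧ ∀ i < j, f i = 0

theorem FirstNonzeroPos.of_le {f : ℕ → SignType} {m n : ℕ} (hmn : m ≤ n)
    (h : FirstNonzeroPos f n) : FirstNonzeroPos f m := by
  rcases h with hzero | ⟨j, hjn, hj, hbefore⟩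
  · exact Or.inl fun j hj => hzero j (hj.trans_le hmn)
  · rcases lt_or_ge j m with hjm | hmj
    · exact Or.inr ⟨j, hjm, hj, hbefore⟩
    · exact Or.inl fun i hi => hbefore i (hi.trans_le hmj)

section LiveEdge

variable {V : Type*} {parent : V → Option V} {Y : V → SignType} {S T : Finset V} {u : V}

theorem reaches.mono (hST : S ⊆ T) (h : reaches parent S u) : reaches parent T u :=
  let ⟨k, s, hk, hs⟩ := h
  ⟨k, s, hk, hST hs⟩

theorem exists_anc_seedDist (h : reaches parent S u) :
    ∃ s, anc parent u (seedDist parent S u) = some s ∧ s ∈ S :=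
  Nat.sInf_mem h

theorem seedDist_le {k : ℕ} {s : V} (hk : anc parent u k = some s) (hs : s ∈ S) :
    seedDist parent S u ≤ k :=
  Nat.sInf_le ⟨s, hk, hs⟩

theorem seedDist_anti (hST : S ⊆ T) (h : reaches parent S u) :
    seedDist parent T u ≤ seedDist parent S u :=
  let ⟨_, hs, hsS⟩ := exists_anc_seedDist h
  seedDist_le hs (hST hsS)

theorem seedDist_eq_of_anc_seedDist_mem (hST : S ⊆ T) {s : V}
    (hs : anc parent u (seedDist parent T u) = some s) (hsS : s ∈ S) :
    seedDist parent S u = seedDist parent T u :=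
  le_antisymm (seedDist_le hs hsS) (seedDist_anti hST ⟨_, s, hs, hsS⟩)

theorem posNode.mono (hST : S ⊆ T) (h : posNode parent Y S u) : posNode parent Y T u :=
  ⟨h.1.mono hST, FirstNonzeroPos.of_le (seedDist_anti hST h.1) h.2⟩

theorem posNode_of_anc_seedDist_mem (hST : S ⊆ T) (h : posNode parent Y T u) {s : V}
    (hs : anc parent u (seedDist parent T u) = some s) (hsS : s ∈ S) :
    posNode parent Y S u := by
  refine ⟨⟨_, s, hs, hsS⟩, ?_⟩
  rw [seedDist_eq_of_anc_seedDist_mem hST hs hsS]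
  exact h.2

theorem Bpos_mono (hST : S ⊆ T) : Bpos parent Y S ⊆ Bpos parent Y T :=
  fun _ => posNode.mono hST

theorem Bpos_insert_sdiff_subset [DecidableEq V] (hST : S ⊆ T) (v : V) :
    Bpos parent Y (insert v T) \ Bpos parent Y T ⊆
      Bpos parent Y (insert v S) \ Bpos parent Y S := by
  rintro u ⟨hu, huT⟩
  obtain ⟨s, hs, hsvT⟩ := exists_anc_seedDist hu.1
  rcases Finset.mem_insert.mp hsvT with rfl | hsT
  · exact ⟨posNode_of_anc_seedDist_mem (Finset.insert_subset_insert s hST) hu hs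
      (Finset.mem_insert_self s S), fun huS => huT (huS.mono hST)⟩
  · exact absurd (posNode_of_anc_seedDist_mem (Finset.subset_insert v T) hu hs hsT) huT

end LiveEdge

theorem Set.ncard_sub_ncard_le_of_sdiff_subset {α : Type*} [Finite α] {A A' B B' : Set α}
    (hA : A ⊆ A') (hB : B ⊆ B') (h : A' \ A ⊆ B' \ B) :
    (A'.ncard : ℝ) - A.ncard ≤ B'.ncard - B.ncard := by
  have hle : ((A' \ A).ncard : ℝ) ≤ (B' \ B).ncard := by exact_mod_cast Set.ncard_le_ncard h
  rw [← Set.ncard_sdiff_add_ncard_of_subset hA, ← Set.ncard_sdiff_add_ncard_of_subset hB]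
  push_cast
  linarith

theorem ncard_Bpos_insert_sub_le {V : Type*} [Finite V] [DecidableEq V] (parent : V → Option V)
    (Y : V → SignType) {S T : Finset V} (hST : S ⊆ T) (v : V) :
    ((Bpos parent Y (insert v T)).ncard : ℝ) - (Bpos parent Y T).ncard ≤
      ((Bpos parent Y (insert v S)).ncard : ℝ) - (Bpos parent Y S).ncard :=
  Set.ncard_sub_ncard_le_of_sdiff_subset (Bpos_mono (Finset.subset_insert v T))
    (Bpos_mono (Finset.subset_insert v S)) (Bpos_insert_sdiff_subset hST v)

instance : IsProbabilityMeasure unif :=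
  ⟨by simp [unif, Real.volume_Icc]⟩

section Measurability

variable {V : Type*}

local instance : MeasurableSpace (Option V) := ⊤

local instance : MeasurableSingletonClass (Option V) := ⟨fun _ => trivial⟩

local instance : MeasurableSpace SignType := ⊤

local instance : MeasurableSingletonClass SignType := ⟨fun _ => trivial⟩

theorem measurable_sampledSign (qp qm : V → ℝ) : Measurable (sampledSign qp qm) :=
  measurable_pi_lambda _ fun v =>
    Measurable.ite (measurableSet_lt (measurable_pi_apply v) measurable_const) measurable_const <|
      Measurable.ite (measurableSet_lt (measurable_pi_apply v) measurable_const)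
        measurable_const measurable_const

variable [Fintype V]

/-- `sampledParent` reads `r v` only through which of the finitely many intervals contain it. -/
theorem measurable_sampledParent (w : V → V → ℝ) (e : V ≃ Fin (Fintype.card V)) :
    Measurable (sampledParent w e) := by
  refine measurable_pi_lambda _ fun v => ?_
  let select : (V → Prop) → Option V := fun p => if h : ∃ u, p u then some h.choose else none
  have hhits : Measurable fun r : V → ℝ => fun u =>
      cumBefore w e v u ≤ r v ∧ r v < cumBefore w e v u + w u v :=
    measurable_pi_lambda _ fun u => measurableSet_setOfPred.mp <|
      (measurableSet_le measurable_const (measurable_pi_apply v)).inter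
        (measurableSet_lt (measurable_pi_apply v) measurable_const)
  convert (measurable_of_countable select).comp hhits using 1
  funext r
  simp only [sampledParent, select, Function.comp_apply]
  congr

theorem measurable_ncard_Bpos_sampled (w : V → V → ℝ) (qp qm : V → ℝ)
    (e : V ≃ Fin (Fintype.card V)) (S : Finset V) :
    Measurable fun ω : (V → ℝ) × (V → ℝ) =>
      ((Bpos (sampledParent w e ω.1) (sampledSign qp qm ω.2) S).ncard : ℝ) := by
  have hsample : Measurable fun ω : (V → ℝ) × (V → ℝ) =>
      (sampledParent w e ω.1, sampledSign qp qm ω.2) :=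
    ((measurable_sampledParent w e).comp measurable_fst).prodMk
      ((measurable_sampledSign qp qm).comp measurable_snd)
  simpa only [Function.comp_def] using (measurable_of_countable fun x : (V → Option V) ×
    (V → SignType) => ((Bpos x.1 x.2 S).ncard : ℝ)).comp hsample

end Measurability

theorem integrable_ncard_Bpos_sampled {V : Type*} [Fintype V] (w : V → V → ℝ)
    (qp qm : V → ℝ) (e : V ≃ Fin (Fintype.card V)) (S : Finset V) :
    Integrable (fun ω : (V → ℝ) × (V → ℝ) =>
        ((Bpos (sampledParent w e ω.1) (sampledSign qp qm ω.2) S).ncard : ℝ))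
      ((Measure.pi fun _ : V => unif).prod (Measure.pi fun _ : V => unif)) :=
  Integrable.of_bound (measurable_ncard_Bpos_sampled w qp qm e S).aestronglyMeasurable
    (Nat.card V) <| .of_forall fun _ => by
      rw [Real.norm_natCast]
      exact_mod_cast Set.ncard_le_card _

theorem tsnExpPos_monotone_submodular_general {V : Type*} [Fintype V] [DecidableEq V]
    (w : V → V → ℝ) (qp qm : V → ℝ) (e : V ≃ Fin (Fintype.card V)) :
    (∀ S T : Finset V, S ⊆ T → tsnExpPos w qp qm e S ≤ tsnExpPos w qp qm e T) ∧
    (∀ S T : Finset V, ∀ v : V, S ⊆ T → v ∉ T →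
      tsnExpPos w qp qm e (insert v T) - tsnExpPos w qp qm e T ≤
        tsnExpPos w qp qm e (insert v S) - tsnExpPos w qp qm e S) := by
  have hint := integrable_ncard_Bpos_sampled w qp qm e
  refine ⟨fun S T hST => ?_, fun S T v hST _ => ?_⟩
  · exact integral_mono (hint S) (hint T) fun _ =>
      Nat.cast_le.mpr (Set.ncard_le_ncard (Bpos_mono hST))
  · unfold tsnExpPos
    rw [← integral_sub (hint (insert v T)) (hint T), ← integral_sub (hint (insert v S)) (hint S)]
    exact integral_mono ((hint _).sub (hint T)) ((hint _).sub (hint S)) fun _ =>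
      ncard_Bpos_insert_sub_le _ _ hST v

/-- the expected positive spread `f̃^+` of the TS-N model is a monotone and
submodular function of the seed set. -/
theorem tsnExpPos_monotone_submodular {V : Type*} [Fintype V] [DecidableEq V]
    (w : V → V → ℝ) (qp qm : V → ℝ) (e : V ≃ Fin (Fintype.card V))
    (hw_nonneg : ∀ u v : V, 0 ≤ w u v)
    (hw_sum : ∀ v : V, ∑ u : V, w u v ≤ 1)
    (hqp : ∀ v : V, 0 ≤ qp v) (hqm : ∀ v : V, 0 ≤ qm v)
    (hr : ∀ v : V, qp v + qm v ≤ 1) :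
    (∀ S T : Finset V, S ⊆ T → tsnExpPos w qp qm e S ≤ tsnExpPos w qp qm e T) ∧
    (∀ S T : Finset V, ∀ v : V, S ⊆ T → v ∉ T →
      tsnExpPos w qp qm e (insert v T) - tsnExpPos w qp qm e T ≤
        tsnExpPos w qp qm e (insert v S) - tsnExpPos w qp qm e S) :=
  tsnExpPos_monotone_submodular_general w qp qm e
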